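/- arXiv:2201.05759 — 4 statements merged into one kernel-verified Lean document; each statement's English description precedes it below -/
import Mathlib

section
/- If the two groups have the same class distribution, i.e. α = β, then the accuracy difference is bounded by AD ≤ α·|TPR^(0) − TPR^(1)| + (1−α)·|TNR^(0) − TNR^(1)|. -/
open MeasureTheory

/-- Conditional probability `P(A | B)` as a real number. -/
noncomputable def condProb {Ω : Type*} [MeasurableSpace Ω] (P : Measure Ω) (A B : Set Ω) : ℝ :=
  (P (A ∩ B)).toReal / (P B).toReal

/-- Group true positive rate `TPR^(s') = P(h = 1 | s = s', y = 1)`. -/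
noncomputable def groupTPR {Ω : Type*} [MeasurableSpace Ω] (P : Measure Ω)
    (y s h : Ω → Bool) (s' : Bool) : ℝ :=
  condProb P {ω | h ω = true} {ω | s ω = s' ∧ y ω = true}

/-- Group true negative rate `TNR^(s') = P(h = 0 | s = s', y = 0)`. -/
noncomputable def groupTNR {Ω : Type*} [MeasurableSpace Ω] (P : Measure Ω)
    (y s h : Ω → Bool) (s' : Bool) : ℝ :=
  condProb P {ω | h ω = false} {ω | s ω = s' ∧ y ω = false}

/-- Group accuracy `Acc^(s') = P(h = y | s = s')`. -/
noncomputable def groupAcc {Ω : Type*} [MeasurableSpace Ω] (P : Measure Ω)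
    (y s h : Ω → Bool) (s' : Bool) : ℝ :=
  condProb P {ω | h ω = y ω} {ω | s ω = s'}

lemma acc_decomp {Ω : Type*} [MeasurableSpace Ω] (P : Measure Ω) [IsProbabilityMeasure P]
    (y s h : Ω → Bool) (hy : Measurable y) (hs : Measurable s) (hh : Measurable h)
    (hpos : ∀ s' k : Bool, 0 < P {ω | s ω = s' ∧ y ω = k}) (s' : Bool) :
    groupAcc P y s h s' = condProb P {ω | y ω = true} {ω | s ω = s'} * groupTPR P y s h s'
      + (1 - condProb P {ω | y ω = true} {ω | s ω = s'}) * groupTNR P y s h s' := by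
  have hmt : MeasurableSet {ω | s ω = s' ∧ y ω = true} := by
    have : {ω | s ω = s' ∧ y ω = true} = s ⁻¹' {s'} ∩ y ⁻¹' {true} := rfl
    rw [this]; exact (hs (measurableSet_singleton _)).inter (hy (measurableSet_singleton _))
  have hmf : MeasurableSet {ω | s ω = s' ∧ y ω = false} := by
    have : {ω | s ω = s' ∧ y ω = false} = s ⁻¹' {s'} ∩ y ⁻¹' {false} := rfl
    rw [this]; exact (hs (measurableSet_singleton _)).inter (hy (measurableSet_singleton _))
  set A := (P {ω | s ω = s' ∧ y ω = true}).toReal with hA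
  set B := (P {ω | s ω = s' ∧ y ω = false}).toReal with hB
  set T := (P ({ω | h ω = true} ∩ {ω | s ω = s' ∧ y ω = true})).toReal with hT
  set N := (P ({ω | h ω = false} ∩ {ω | s ω = s' ∧ y ω = false})).toReal with hN
  have hApos : 0 < A := ENNReal.toReal_pos (hpos s' true).ne' (measure_ne_top _ _)
  have hBpos : 0 < B := ENNReal.toReal_pos (hpos s' false).ne' (measure_ne_top _ _)
  -- denominator split
  have hsplit1 : (P {ω | s ω = s'}).toReal = A + B := by
    have hset : {ω | s ω = s'} = {ω | s ω = s' ∧ y ω = true} ∪ {ω | s ω = s' ∧ y ω = false} := by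
      ext ω; simp only [Set.mem_setOf_eq, Set.mem_union]
      cases hyω : y ω <;> simp [hyω]
    have hdisj : Disjoint {ω | s ω = s' ∧ y ω = true} {ω | s ω = s' ∧ y ω = false} := by
      rw [Set.disjoint_left]; rintro ω ⟨_, h1⟩ ⟨_, h2⟩; simp [h1] at h2
    rw [hset, measure_union hdisj hmf, ENNReal.toReal_add (measure_ne_top _ _) (measure_ne_top _ _)]
  -- numerator splits
  have hset2 : {ω | h ω = y ω} ∩ {ω | s ω = s'}
      = ({ω | h ω = true} ∩ {ω | s ω = s' ∧ y ω = true})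
        ∪ ({ω | h ω = false} ∩ {ω | s ω = s' ∧ y ω = false}) := by
    ext ω; simp only [Set.mem_inter_iff, Set.mem_setOf_eq, Set.mem_union]
    cases hyω : y ω <;> cases hhω : h ω <;> simp [hyω, hhω]
  have hdisj2 : Disjoint ({ω | h ω = true} ∩ {ω | s ω = s' ∧ y ω = true})
      ({ω | h ω = false} ∩ {ω | s ω = s' ∧ y ω = false}) := by
    rw [Set.disjoint_left]; rintro ω ⟨h1, _⟩ ⟨h2, _⟩; simp only [Set.mem_setOf_eq] at h1 h2; simp [h1] at h2
  have hsplit2 : (P ({ω | h ω = y ω} ∩ {ω | s ω = s'})).toReal = T + N := by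
    rw [hset2, measure_union hdisj2 ((hh (measurableSet_singleton _)).inter hmf),
      ENNReal.toReal_add (measure_ne_top _ _) (measure_ne_top _ _)]
  have hset3 : {ω | y ω = true} ∩ {ω | s ω = s'} = {ω | s ω = s' ∧ y ω = true} := by
    ext ω; simp only [Set.mem_inter_iff, Set.mem_setOf_eq]; tauto
  unfold groupAcc groupTPR groupTNR condProb
  rw [hsplit2, hsplit1, hset3]
  rw [← hA, ← hB, ← hT, ← hN]
  field_simp
  ring

/-- if the two groups have the same class distribution (`α = β`), then
`AD ≤ α·|TPR⁰ − TPR¹| + (1−α)·|TNR⁰ − TNR¹|`. -/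
theorem accuracy_difference_bound_equal_class_distribution
    {Ω : Type*} [MeasurableSpace Ω] (P : Measure Ω) [IsProbabilityMeasure P]
    (y s h : Ω → Bool) (hy : Measurable y) (hs : Measurable s) (hh : Measurable h)
    (hpos : ∀ s' k : Bool, 0 < P {ω | s ω = s' ∧ y ω = k})
    (α β : ℝ)
    (hα : α = condProb P {ω | y ω = true} {ω | s ω = false})
    (hβ : β = condProb P {ω | y ω = true} {ω | s ω = true})
    (hαβ : α = β) :
    |groupAcc P y s h false - groupAcc P y s h true| ≤
      α * |groupTPR P y s h false - groupTPR P y s h true| +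
      (1 - α) * |groupTNR P y s h false - groupTNR P y s h true| := by
  have hα0 : 0 ≤ α := by
    rw [hα]; exact div_nonneg ENNReal.toReal_nonneg ENNReal.toReal_nonneg
  have hα1 : α ≤ 1 := by
    rw [hα]
    apply div_le_one_of_le₀
    · exact ENNReal.toReal_mono (measure_ne_top _ _) (measure_mono Set.inter_subset_right)
    · exact ENNReal.toReal_nonneg
  rw [acc_decomp P y s h hy hs hh hpos false, acc_decomp P y s h hy hs hh hpos true,
    ← hα, ← hβ, ← hαβ]
  set T0 := groupTPR P y s h false
  set T1 := groupTPR P y s h true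
  set N0 := groupTNR P y s h false
  set N1 := groupTNR P y s h true
  have heq : α * T0 + (1 - α) * N0 - (α * T1 + (1 - α) * N1)
      = α * (T0 - T1) + (1 - α) * (N0 - N1) := by ring
  rw [heq]
  calc |α * (T0 - T1) + (1 - α) * (N0 - N1)|
      ≤ |α * (T0 - T1)| + |(1 - α) * (N0 - N1)| := abs_add_le _ _
    _ = α * |T0 - T1| + (1 - α) * |N0 - N1| := by
        rw [abs_mul, abs_mul, abs_of_nonneg hα0, abs_of_nonneg (show (0:ℝ) ≤ 1 - α by linarith)]
end

section
/- If the group class distributions are mirrored, i.e. β = 1 − α with α ≤ 1/2, then the accuracy difference satisfies AD ≤ α·|TPR^(0) − TPR^(1)| + α·|TNR^(0) − TNR^(1)| + (1 − 2α)·|TPR^(1) − TNR^(0)|. -/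
open MeasureTheory

/-! Conditioning on `s = s'` and splitting on `y`, the law of total probability writes
`Acc^(0) = α TPR^(0) + (1 - α) TNR^(0)` and, under the mirroring `β = 1 - α`,
`Acc^(1) = (1 - α) TPR^(1) + α TNR^(1)`. The difference of the two is then
`α (TPR^(0) - TPR^(1)) + α (TNR^(0) - TNR^(1)) + (1 - 2α) (TNR^(0) - TPR^(1))`,
and the triangle inequality with `0 ≤ α ≤ 1/2` gives the bound. -/

section CondProb

variable {Ω : Type*} [MeasurableSpace Ω] {P : Measure Ω} {A A' B T : Set Ω}

lemma condProb_nonneg : 0 ≤ condProb P A B := by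
  unfold condProb; positivity

lemma condProb_congr_left (h : A ∩ B = A' ∩ B) : condProb P A B = condProb P A' B := by
  rw [condProb, condProb, h]

lemma condProb_of_measure_eq_zero (hB : P B = 0) : condProb P A B = 0 := by
  rw [condProb, hB, ENNReal.toReal_zero, div_zero]

variable [IsFiniteMeasure P]

lemma condProb_univ (hB : P B ≠ 0) : condProb P Set.univ B = 1 := by
  rw [condProb, Set.univ_inter]
  exact div_self (ENNReal.toReal_ne_zero.2 ⟨hB, measure_ne_top P B⟩)

lemma condProb_mul_condProb_inter :
    condProb P T B * condProb P A (B ∩ T) = condProb P (A ∩ T) B := by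
  have hsets : A ∩ (B ∩ T) = A ∩ T ∩ B := by rw [Set.inter_comm B T, Set.inter_assoc]
  rw [condProb, condProb, condProb, hsets, Set.inter_comm T B]
  by_cases hBT : (P (B ∩ T)).toReal = 0
  · have hnull : P (B ∩ T) = 0 :=
      ((ENNReal.toReal_eq_zero_iff _).1 hBT).resolve_right (measure_ne_top P _)
    have hsub : P (A ∩ T ∩ B) = 0 :=
      measure_mono_null (fun _ hω => ⟨hω.2, hω.1.2⟩ : A ∩ T ∩ B ⊆ B ∩ T) hnull
    simp [hnull, hsub]
  · field_simp

lemma condProb_inter_add_condProb_inter_compl (hT : MeasurableSet T) :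
    condProb P (A ∩ T) B + condProb P (A ∩ Tᶜ) B = condProb P A B := by
  rw [condProb, condProb, condProb, ← add_div, ← ENNReal.toReal_add (measure_ne_top P _)
    (measure_ne_top P _), Set.inter_right_comm A T B, Set.inter_right_comm A Tᶜ B, ← Set.sdiff_eq,
    measure_inter_add_sdiff _ hT]

lemma condProb_compl (hT : MeasurableSet T) (hB : P B ≠ 0) :
    condProb P Tᶜ B = 1 - condProb P T B := by
  have h := condProb_inter_add_condProb_inter_compl (P := P) (A := Set.univ) (B := B) hT
  rw [Set.univ_inter, Set.univ_inter, condProb_univ hB] at h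
  linarith

/-- Stated with `1 - P(T | B)` rather than `P(Tᶜ | B)` so that it also holds when `P B = 0`. -/
lemma condProb_eq_add_of_measurableSet (hT : MeasurableSet T) :
    condProb P A B =
      condProb P T B * condProb P A (B ∩ T) + (1 - condProb P T B) * condProb P A (B ∩ Tᶜ) := by
  by_cases hB : P B = 0
  · have hBT : P (B ∩ Tᶜ) = 0 := measure_mono_null Set.inter_subset_left hB
    simp [condProb_of_measure_eq_zero hB, condProb_of_measure_eq_zero hBT]
  · rw [← condProb_compl hT hB, condProb_mul_condProb_inter, condProb_mul_condProb_inter,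
      condProb_inter_add_condProb_inter_compl hT]

end CondProb

lemma groupAcc_eq_add {Ω : Type*} [MeasurableSpace Ω] (P : Measure Ω) [IsFiniteMeasure P]
    {y : Ω → Bool} (s h : Ω → Bool) (hy : Measurable y) (b : Bool) :
    groupAcc P y s h b =
      condProb P {ω | y ω = true} {ω | s ω = b} * groupTPR P y s h b +
        (1 - condProb P {ω | y ω = true} {ω | s ω = b}) * groupTNR P y s h b := by
  have hT : MeasurableSet {ω | y ω = true} := hy (measurableSet_singleton true)
  have hfalse : {ω | s ω = b} ∩ {ω | y ω = true}ᶜ = {ω | s ω = b ∧ y ω = false} := by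
    ext ω; simp
  rw [groupAcc, condProb_eq_add_of_measurableSet hT, hfalse, groupTPR, groupTNR]
  congr 2
  · exact condProb_congr_left (by ext ω; cases hyω : y ω <;> simp [hyω])
  · exact condProb_congr_left (by ext ω; cases hyω : y ω <;> simp [hyω])

lemma abs_sub_le_of_mirrored {α t₀ t₁ n₀ n₁ : ℝ} (hα₀ : 0 ≤ α) (hα : α ≤ 1 / 2) :
    |(α * t₀ + (1 - α) * n₀) - ((1 - α) * t₁ + α * n₁)| ≤
      α * |t₀ - t₁| + α * |n₀ - n₁| + (1 - 2 * α) * |t₁ - n₀| := by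
  have hdiff : (α * t₀ + (1 - α) * n₀) - ((1 - α) * t₁ + α * n₁) =
      α * (t₀ - t₁) + α * (n₀ - n₁) + (1 - 2 * α) * (n₀ - t₁) := by ring
  rw [hdiff, abs_sub_comm t₁]
  calc _ ≤ |α * (t₀ - t₁)| + |α * (n₀ - n₁)| + |(1 - 2 * α) * (n₀ - t₁)| := abs_add_three _ _ _
    _ = _ := by
      rw [abs_mul, abs_mul, abs_mul, abs_of_nonneg hα₀, abs_of_nonneg (by linarith : 0 ≤ 1 - 2 * α)]

theorem accuracy_difference_bound_distribution_shift_general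
    {Ω : Type*} [MeasurableSpace Ω] (P : Measure Ω) [IsProbabilityMeasure P]
    (y s h : Ω → Bool) (hy : Measurable y)
    (α β : ℝ)
    (hα : α = condProb P {ω | y ω = true} {ω | s ω = false})
    (hβ : β = condProb P {ω | y ω = true} {ω | s ω = true})
    (hmirror : β = 1 - α) (hhalf : α ≤ 1 / 2) :
    |groupAcc P y s h false - groupAcc P y s h true| ≤
      α * |groupTPR P y s h false - groupTPR P y s h true| +
      α * |groupTNR P y s h false - groupTNR P y s h true| +
      (1 - 2 * α) * |groupTPR P y s h true - groupTNR P y s h false| := by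
  rw [groupAcc_eq_add P s h hy false, groupAcc_eq_add P s h hy true, ← hα, ← hβ, hmirror,
    sub_sub_cancel]
  exact abs_sub_le_of_mirrored (hα ▸ condProb_nonneg) hhalf

/-- if the group class distributions are mirrored (`β = 1 − α`, `α ≤ 1/2`), then
`AD ≤ α·|TPR⁰ − TPR¹| + α·|TNR⁰ − TNR¹| + (1 − 2α)·|TPR¹ − TNR⁰|`. -/
theorem accuracy_difference_bound_distribution_shift
    {Ω : Type*} [MeasurableSpace Ω] (P : Measure Ω) [IsProbabilityMeasure P]
    (y s h : Ω → Bool) (hy : Measurable y) (hs : Measurable s) (hh : Measurable h)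
    (hpos : ∀ s' k : Bool, 0 < P {ω | s ω = s' ∧ y ω = k})
    (α β : ℝ)
    (hα : α = condProb P {ω | y ω = true} {ω | s ω = false})
    (hβ : β = condProb P {ω | y ω = true} {ω | s ω = true})
    (hmirror : β = 1 - α) (hhalf : α ≤ 1 / 2) :
    |groupAcc P y s h false - groupAcc P y s h true| ≤
      α * |groupTPR P y s h false - groupTPR P y s h true| +
      α * |groupTNR P y s h false - groupTNR P y s h true| +
      (1 - 2 * α) * |groupTPR P y s h true - groupTNR P y s h false| :=
  accuracy_difference_bound_distribution_shift_general P y s h hy α β hα hβ hmirror hhalf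
end

section
/- If β = 1 − α with α ≤ 1/2 and additionally TPR^(1) = TNR^(0), then the accuracy difference satisfies AD ≤ α·|TPR^(0) − TPR^(1)| + α·|TNR^(0) − TNR^(1)|. -/
open MeasureTheory

/-- if `β = 1 − α` with `α ≤ 1/2` and additionally `TPR¹ = TNR⁰`, then
`AD ≤ α·|TPR⁰ − TPR¹| + α·|TNR⁰ − TNR¹|`. -/
theorem accuracy_difference_bound_distribution_shift_matched
    {Ω : Type*} [MeasurableSpace Ω] (P : Measure Ω) [IsProbabilityMeasure P]
    (y s h : Ω → Bool) (hy : Measurable y) (hs : Measurable s) (hh : Measurable h)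
    (hpos : ∀ s' k : Bool, 0 < P {ω | s ω = s' ∧ y ω = k})
    (α β : ℝ)
    (hα : α = condProb P {ω | y ω = true} {ω | s ω = false})
    (hβ : β = condProb P {ω | y ω = true} {ω | s ω = true})
    (hmirror : β = 1 - α) (hhalf : α ≤ 1 / 2)
    (hmatch : groupTPR P y s h true = groupTNR P y s h false) :
    |groupAcc P y s h false - groupAcc P y s h true| ≤
      α * |groupTPR P y s h false - groupTPR P y s h true| +
      α * |groupTNR P y s h false - groupTNR P y s h true| := by
  -- measurability of the basic sets
  have hmsy : ∀ s' k : Bool, MeasurableSet {ω | s ω = s' ∧ y ω = k} := fun s' k =>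
    (hs (measurableSet_singleton s')).inter (hy (measurableSet_singleton k))
  -- split of the accuracy numerator
  have hacc_split : ∀ s' : Bool,
      P ({ω | h ω = y ω} ∩ {ω | s ω = s'}) =
      P ({ω | h ω = true} ∩ {ω | s ω = s' ∧ y ω = true}) +
      P ({ω | h ω = false} ∩ {ω | s ω = s' ∧ y ω = false}) := by
    intro s'
    have hset : {ω | h ω = y ω} ∩ {ω | s ω = s'} =
        ({ω | h ω = true} ∩ {ω | s ω = s' ∧ y ω = true}) ∪
        ({ω | h ω = false} ∩ {ω | s ω = s' ∧ y ω = false}) := by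
      ext ω
      simp only [Set.mem_inter_iff, Set.mem_union, Set.mem_setOf_eq]
      cases hb : h ω <;> cases yb : y ω <;> simp [hb, yb]
    have hdisj : Disjoint ({ω | h ω = true} ∩ {ω | s ω = s' ∧ y ω = true})
        ({ω | h ω = false} ∩ {ω | s ω = s' ∧ y ω = false}) := by
      apply Set.disjoint_left.mpr
      rintro ω ⟨h1, -⟩ ⟨h2, -⟩
      simp only [Set.mem_setOf_eq] at h1 h2
      rw [h1] at h2; exact Bool.noConfusion h2
    have hmeas2 : MeasurableSet ({ω | h ω = false} ∩ {ω | s ω = s' ∧ y ω = false}) :=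
      (hh (measurableSet_singleton false)).inter (hmsy s' false)
    rw [hset, measure_union hdisj hmeas2]
  -- split of the group mass
  have hs_split : ∀ s' : Bool,
      P {ω | s ω = s'} =
      P {ω | s ω = s' ∧ y ω = true} + P {ω | s ω = s' ∧ y ω = false} := by
    intro s'
    have hset : {ω | s ω = s'} =
        {ω | s ω = s' ∧ y ω = true} ∪ {ω | s ω = s' ∧ y ω = false} := by
      ext ω
      simp only [Set.mem_union, Set.mem_setOf_eq]
      cases yb : y ω <;> simp [yb] <;> tauto
    have hdisj : Disjoint {ω | s ω = s' ∧ y ω = true} {ω | s ω = s' ∧ y ω = false} := by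
      apply Set.disjoint_left.mpr
      rintro ω ⟨-, h1⟩ ⟨-, h2⟩
      rw [h1] at h2; exact Bool.noConfusion h2
    rw [hset, measure_union hdisj (hmsy s' false)]
  have hyset : ∀ s' : Bool,
      {ω | y ω = true} ∩ {ω | s ω = s'} = {ω | s ω = s' ∧ y ω = true} := by
    intro s'; ext ω; simp only [Set.mem_inter_iff, Set.mem_setOf_eq]; tauto
  -- real-valued masses
  set a := (P {ω | s ω = false ∧ y ω = true}).toReal with ha_def
  set b := (P {ω | s ω = false ∧ y ω = false}).toReal with hb_def
  set c := (P {ω | s ω = true ∧ y ω = true}).toReal with hc_def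
  set d := (P {ω | s ω = true ∧ y ω = false}).toReal with hd_def
  have hapos : 0 < a := ENNReal.toReal_pos (hpos false true).ne' (measure_ne_top P _)
  have hbpos : 0 < b := ENNReal.toReal_pos (hpos false false).ne' (measure_ne_top P _)
  have hcpos : 0 < c := ENNReal.toReal_pos (hpos true true).ne' (measure_ne_top P _)
  have hdpos : 0 < d := ENNReal.toReal_pos (hpos true false).ne' (measure_ne_top P _)
  set na := (P ({ω | h ω = true} ∩ {ω | s ω = false ∧ y ω = true})).toReal with hna_def
  set nb := (P ({ω | h ω = false} ∩ {ω | s ω = false ∧ y ω = false})).toReal with hnb_def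
  set nc := (P ({ω | h ω = true} ∩ {ω | s ω = true ∧ y ω = true})).toReal with hnc_def
  set nd := (P ({ω | h ω = false} ∩ {ω | s ω = true ∧ y ω = false})).toReal with hnd_def
  -- group masses in real form
  have hmass : ∀ s' : Bool, (P {ω | s ω = s'}).toReal =
      (P {ω | s ω = s' ∧ y ω = true}).toReal + (P {ω | s ω = s' ∧ y ω = false}).toReal := by
    intro s'
    rw [hs_split s', ENNReal.toReal_add (measure_ne_top P _) (measure_ne_top P _)]
  have hnum : ∀ s' : Bool, (P ({ω | h ω = y ω} ∩ {ω | s ω = s'})).toReal =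
      (P ({ω | h ω = true} ∩ {ω | s ω = s' ∧ y ω = true})).toReal +
      (P ({ω | h ω = false} ∩ {ω | s ω = s' ∧ y ω = false})).toReal := by
    intro s'
    rw [hacc_split s', ENNReal.toReal_add (measure_ne_top P _) (measure_ne_top P _)]
  -- express everything in terms of a,b,c,d,na,nb,nc,nd
  have hT0 : groupTPR P y s h false = na / a := rfl
  have hN0 : groupTNR P y s h false = nb / b := rfl
  have hT1 : groupTPR P y s h true = nc / c := rfl
  have hN1 : groupTNR P y s h true = nd / d := rfl
  have hA0 : groupAcc P y s h false = (na + nb) / (a + b) := by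
    unfold groupAcc condProb
    rw [hnum false, hmass false]
  have hA1 : groupAcc P y s h true = (nc + nd) / (c + d) := by
    unfold groupAcc condProb
    rw [hnum true, hmass true]
  have hαval : α = a / (a + b) := by
    rw [hα]; unfold condProb
    rw [hyset false, hmass false]
  have hβval : β = c / (c + d) := by
    rw [hβ]; unfold condProb
    rw [hyset true, hmass true]
  -- algebraic decomposition of accuracies
  have habpos : 0 < a + b := by linarith
  have hcdpos : 0 < c + d := by linarith
  have hAcc0 : groupAcc P y s h false = α * (na / a) + (1 - α) * (nb / b) := by
    rw [hA0, hαval]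
    field_simp
    ring
  have hAcc1 : groupAcc P y s h true = β * (nc / c) + (1 - β) * (nd / d) := by
    rw [hA1, hβval]
    field_simp
    ring
  rw [hT1, hN0] at hmatch
  rw [hT0, hN0, hT1, hN1]
  have hαnonneg : 0 ≤ α := by
    rw [hαval]; positivity
  have key : groupAcc P y s h false - groupAcc P y s h true =
      α * (na / a - nc / c) + α * (nb / b - nd / d) := by
    rw [hAcc0, hAcc1, hmirror, ← hmatch]
    ring
  rw [key]
  calc |α * (na / a - nc / c) + α * (nb / b - nd / d)|
      ≤ |α * (na / a - nc / c)| + |α * (nb / b - nd / d)| := abs_add_le _ _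
    _ = α * |na / a - nc / c| + α * |nb / b - nd / d| := by
        rw [abs_mul, abs_mul, abs_of_nonneg hαnonneg]
end

section
/- (Influence of a sample on a differentiable functional of the parameters.) For any function f : E → ℝ differentiable at θ*, the map ε ↦ f(θ(ε)) is differentiable at 0 with derivative d/dε f(θ(ε))|_{ε=0} = −⟨∇f(θ*), H⁻¹(∇g(θ*))⟩. -/
/-!
Differentiating the first-order condition `∇L(θ ε) + ε ∇g(θ ε) = 0` at `ε = 0` gives
`H θ'(0) + ∇g(θ*) = 0`, so `θ'(0) = -H⁻¹ ∇g(θ*)`; the chain rule for `f` then gives the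
derivative `⟪∇f(θ*), θ'(0)⟫`.
-/

open Filter Topology

theorem ContDiff.gradient {E : Type*} [NormedAddCommGroup E] [InnerProductSpace ℝ E]
    [CompleteSpace E] {f : E → ℝ} {n : WithTop ℕ∞} (hf : ContDiff ℝ (n + 1) f) :
    ContDiff ℝ n (gradient f) :=
  (InnerProductSpace.toDual ℝ E).symm.contDiff.comp (hf.fderiv_right le_rfl)

section ImplicitDerivative

variable {𝕜 : Type*} [NontriviallyNormedField 𝕜]
  {E F : Type*} [NormedAddCommGroup E] [NormedSpace 𝕜 E] [NormedAddCommGroup F] [NormedSpace 𝕜 F]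

theorem hasDerivAt_smul_self_of_continuousAt {u : 𝕜 → F} (hu : ContinuousAt u 0) :
    HasDerivAt (fun t => t • u t) (u 0) 0 := by
  rw [hasDerivAt_iff_tendsto_slope]
  refine (hu.tendsto.mono_left nhdsWithin_le_nhds).congr' ?_
  filter_upwards [self_mem_nhdsWithin] with t (ht : t ≠ 0)
  simp [slope, smul_smul, inv_mul_cancel₀ ht]

theorem hasDerivAt_of_eventually_add_smul_eq_zero {φ ψ : E → F} {A : E ≃L[𝕜] F} {γ : 𝕜 → E}
    (hφ : HasFDerivAt φ (A : E →L[𝕜] F) (γ 0)) (hψ : ContinuousAt ψ (γ 0))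
    (hγ : DifferentiableAt 𝕜 γ 0) (h : ∀ᶠ t in 𝓝 0, φ (γ t) + t • ψ (γ t) = 0) :
    HasDerivAt γ (-A.symm (ψ (γ 0))) 0 := by
  have hsum : HasDerivAt (fun t => φ (γ t) + t • ψ (γ t)) (A (deriv γ 0) + ψ (γ 0)) 0 :=
    (hφ.comp_hasDerivAt 0 hγ.hasDerivAt).add
      (hasDerivAt_smul_self_of_continuousAt (hψ.comp hγ.continuousAt))
  have hzero : HasDerivAt (fun t => φ (γ t) + t • ψ (γ t)) 0 0 :=
    (hasDerivAt_const 0 0).congr_of_eventuallyEq h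
  have hA : A (deriv γ 0) = -ψ (γ 0) := eq_neg_of_add_eq_zero_left (hsum.unique hzero)
  have hderiv : deriv γ 0 = -A.symm (ψ (γ 0)) := by
    rw [← map_neg, ← hA, A.symm_apply_apply]
  exact hderiv ▸ hγ.hasDerivAt

end ImplicitDerivative

/-- influence of a sample on a differentiable functional of the parameters:
under the setting of the influence function, for any `f : E → ℝ` differentiable at `θ*`,
the map `ε ↦ f(θ(ε))` is differentiable at `0` with derivative
`−⟨∇f(θ*), H⁻¹(∇g(θ*))⟩`. -/
theorem influence_on_functional
    {E : Type*} [NormedAddCommGroup E] [InnerProductSpace ℝ E] [FiniteDimensional ℝ E]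
    (L g : E → ℝ) (hL : ContDiff ℝ 2 L) (hg : ContDiff ℝ 1 g)
    (θ : ℝ → E) (θs : E) (hθ0 : θ 0 = θs) (hθ : DifferentiableAt ℝ θ 0)
    (H : E ≃L[ℝ] E) (hH : (H : E →L[ℝ] E) = fderiv ℝ (gradient L) θs)
    (hcrit : ∀ᶠ ε in nhds (0 : ℝ), gradient L (θ ε) + ε • gradient g (θ ε) = 0)
    (f : E → ℝ) (hf : DifferentiableAt ℝ f θs) :
    HasDerivAt (fun ε => f (θ ε))
      (-(@inner ℝ E _ (gradient f θs) (H.symm (gradient g θs)))) 0 := by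
  subst hθ0
  have hHessian : HasFDerivAt (gradient L) (H : E →L[ℝ] E) (θ 0) :=
    hH ▸ (hL.gradient.differentiable one_ne_zero _).hasFDerivAt
  have hθ' : HasDerivAt θ (-H.symm (gradient g (θ 0))) 0 :=
    hasDerivAt_of_eventually_add_smul_eq_zero hHessian
      (hg.gradient (n := 0)).continuous.continuousAt hθ hcrit
  have hchain := hf.hasFDerivAt.comp_hasDerivAt 0 hθ'
  rwa [← inner_gradient_left, inner_neg_right] at hchain
end
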